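/- Let A and B be n×n positive definite complex matrices and t ∈ [0, 1]. Then A^{1/2} (A ♮_t B) A^{1/2} ⪯ A^{1/2} (A ◇_t B) A^{1/2} in the near-order. -/

import Mathlib

open Matrix
open scoped ComplexOrder

/-- Real power of a matrix via functional calculus on the spectrum (junk value
if the matrix is not Hermitian). -/
noncomputable def mrpow {n : ℕ} (A : Matrix (Fin n) (Fin n) ℂ) (r : ℝ) :
    Matrix (Fin n) (Fin n) ℂ :=
  if hA : A.IsHermitian then
    (hA.eigenvectorUnitary : Matrix (Fin n) (Fin n) ℂ) *
      diagonal (fun i => ((hA.eigenvalues i ^ r : ℝ) : ℂ)) *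
      (star (hA.eigenvectorUnitary : Matrix (Fin n) (Fin n) ℂ))
  else A

/-- The metric geometric mean `A # B = A^{1/2} (A^{-1/2} B A^{-1/2})^{1/2} A^{1/2}`. -/
noncomputable def sharp {n : ℕ} (A B : Matrix (Fin n) (Fin n) ℂ) :
    Matrix (Fin n) (Fin n) ℂ :=
  mrpow A (1/2) * mrpow (mrpow A (-(1/2)) * B * mrpow A (-(1/2))) (1/2) * mrpow A (1/2)

/-- The Loewner order `A ≤ B`, i.e. `B - A` is positive semidefinite. -/
def loewnerLE {n : ℕ} (A B : Matrix (Fin n) (Fin n) ℂ) : Prop := (B - A).PosSemidef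

/-- The near-order `A ⪯ B`, i.e. `A⁻¹ # B ≥ I` in the Loewner order. -/
def nearLE {n : ℕ} (A B : Matrix (Fin n) (Fin n) ℂ) : Prop := loewnerLE 1 (sharp A⁻¹ B)

/-- The spectral geometric mean `A ♮ₜ B = (A⁻¹ # B)^t A (A⁻¹ # B)^t`. -/
noncomputable def spectralGM {n : ℕ} (t : ℝ) (A B : Matrix (Fin n) (Fin n) ℂ) :
    Matrix (Fin n) (Fin n) ℂ :=
  mrpow (sharp A⁻¹ B) t * A * mrpow (sharp A⁻¹ B) t

/-- The Wasserstein mean `A ◇ₜ B = [(1-t)I + t(A⁻¹ # B)] A [(1-t)I + t(A⁻¹ # B)]`. -/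
noncomputable def wassersteinMean {n : ℕ} (t : ℝ) (A B : Matrix (Fin n) (Fin n) ℂ) :
    Matrix (Fin n) (Fin n) ℂ :=
  ((1 - t) • (1 : Matrix (Fin n) (Fin n) ℂ) + t • sharp A⁻¹ B) * A *
    ((1 - t) • (1 : Matrix (Fin n) (Fin n) ℂ) + t • sharp A⁻¹ B)

/-!
Write `P = A^{1/2}`, `C = A⁻¹ # B` and `D = (1-t)I + tC`. Since `A = P²`, the two matrices to be
compared are the squares of `U = P C^t P` and `V = P D P`, and the weighted AM–GM inequality
`x^t ≤ (1-t) + t x` on the spectrum of `C` gives `U ≤ V`. So it suffices that `U ≤ V` implies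
`U² ⪯ V²`.

For `X > 0` the near-order `X ⪯ Y` reads `X ≤ (X^{1/2} Y X^{1/2})^{1/2}`, so `≤` implies `⪯` by
operator monotonicity of the square root. Put `H = U⁻¹ # V`; then `H U H = V` and `H ≥ I`, hence
`H² ≥ I`. With `L = U H U` we get `U V² U = L H² L ≥ L²`, and therefore
`(U V² U)^{1/2} ≥ L ≥ U²`, which is `U² ⪯ V²`.
-/

-- The L2 operator norm makes matrices a C⋆-algebra, where `CFC.sqrt` is operator monotone.
open scoped MatrixOrder Matrix.Norms.L2Operator

lemma one_le_mul_self_of_one_le {R : Type*} [Ring R] [PartialOrder R] [StarRing R]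
    [StarOrderedRing R] {h : R} (hh : 1 ≤ h) : 1 ≤ h * h := by
  have hsa : IsSelfAdjoint (h - 1) := IsSelfAdjoint.of_nonneg (sub_nonneg.mpr hh)
  have hdecomp : h * h - 1 = star (h - 1) * (h - 1) + 2 • (h - 1) := by
    rw [hsa.star_eq]; noncomm_ring
  rw [← sub_nonneg, hdecomp]
  exact add_nonneg (star_mul_self_nonneg _) (nsmul_nonneg (sub_nonneg.mpr hh) 2)

lemma rpow_le_one_sub_smul_one_add_smul {R : Type*} [CStarAlgebra R] [PartialOrder R]
    [StarOrderedRing R] {a : R} (ha : 0 ≤ a) {t : ℝ} (ht0 : 0 ≤ t)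
    (ht1 : t ≤ 1) : a ^ t ≤ (1 - t) • (1 : R) + t • a := by
  have hlin : (1 - t) • (1 : R) + t • a = cfc (fun x : ℝ => (1 - t) + t * x) a := by
    rw [cfc_add .., cfc_const_mul .., cfc_const .., cfc_id' ..,
      Algebra.algebraMap_eq_smul_one]
  rw [CFC.rpow_eq_cfc_real ha, hlin]
  refine cfc_mono fun x hx => ?_
  have hx0 : 0 ≤ x := by grind
  have h := rpow_one_add_le_one_add_mul_self (s := x - 1) (by linarith) ht0 ht1
  rw [add_sub_cancel] at h
  linarith

variable {n : ℕ}

lemma mrpow_eq_cfc {A : Matrix (Fin n) (Fin n) ℂ} (hA : A.IsHermitian) (r : ℝ) :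
    mrpow A r = cfc (fun x : ℝ => x ^ r) A := by
  rw [hA.cfc_eq, Matrix.IsHermitian.cfc, Unitary.conjStarAlgAut_apply, mrpow, dif_pos hA]
  rfl

lemma mrpow_eq_rpow {A : Matrix (Fin n) (Fin n) ℂ} (hA : 0 ≤ A) (r : ℝ) :
    mrpow A r = A ^ r := by
  rw [mrpow_eq_cfc (Matrix.nonneg_iff_posSemidef.mp hA).1, CFC.rpow_eq_cfc_real hA]

lemma mrpow_one_half {A : Matrix (Fin n) (Fin n) ℂ} (hA : 0 ≤ A) :
    mrpow A (1/2) = CFC.sqrt A := by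
  rw [mrpow_eq_rpow hA, CFC.sqrt_eq_rpow]

lemma mrpow_neg_one_half {A : Matrix (Fin n) (Fin n) ℂ} (hA : A.PosDef) :
    mrpow A (-(1/2)) = (CFC.sqrt A)⁻¹ := by
  rw [mrpow_eq_rpow hA.posSemidef.nonneg, CFC.sqrt_eq_rpow]
  exact (Matrix.inv_eq_right_inv
    (CFC.rpow_mul_rpow_neg _ (Matrix.isStrictlyPositive_iff_posDef.mpr hA))).symm

lemma Matrix.PosDef.conjugate {X Y : Matrix (Fin n) (Fin n) ℂ} (hY : Y.PosDef) (hX : X.PosDef) :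
    (X * Y * X).PosDef := by
  rw [← Matrix.isStrictlyPositive_iff_posDef] at hX hY ⊢
  exact IsStrictlyPositive.conjugate_of_isUnit_of_isSelfAdjoint Y X hX.isUnit

lemma Matrix.PosDef.sqrt {X : Matrix (Fin n) (Fin n) ℂ} (hX : X.PosDef) :
    (CFC.sqrt X).PosDef := by
  rw [← Matrix.isStrictlyPositive_iff_posDef] at hX ⊢
  exact hX.sqrt

lemma Matrix.PosDef.rpow {X : Matrix (Fin n) (Fin n) ℂ} (hX : X.PosDef) (r : ℝ) :
    (X ^ r).PosDef := by
  rw [← Matrix.isStrictlyPositive_iff_posDef] at hX ⊢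
  exact IsStrictlyPositive.rpow X r hX

lemma sharp_inv_eq {X Y : Matrix (Fin n) (Fin n) ℂ} (hX : X.PosDef) (hY : 0 ≤ Y) :
    sharp X⁻¹ Y = (CFC.sqrt X)⁻¹ * CFC.sqrt (CFC.sqrt X * Y * CFC.sqrt X) * (CFC.sqrt X)⁻¹ := by
  have hS := (Matrix.isUnit_iff_isUnit_det _).mp hX.sqrt.isUnit
  rw [sharp, mrpow_neg_one_half hX.inv, mrpow_one_half hX.inv.posSemidef.nonneg,
    ← hX.posSemidef.inv_sqrt, Matrix.nonsing_inv_nonsing_inv _ hS,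
    mrpow_one_half (conjugate_nonneg_of_nonneg hY (CFC.sqrt_nonneg X))]

lemma sharp_inv_posDef {X Y : Matrix (Fin n) (Fin n) ℂ} (hX : X.PosDef) (hY : Y.PosDef) :
    (sharp X⁻¹ Y).PosDef := by
  rw [sharp_inv_eq hX hY.posSemidef.nonneg]
  exact ((hY.conjugate hX.sqrt).sqrt).conjugate hX.sqrt.inv

lemma sharp_inv_mul_mul_sharp_inv {X Y : Matrix (Fin n) (Fin n) ℂ} (hX : X.PosDef) (hY : 0 ≤ Y) :
    sharp X⁻¹ Y * X * sharp X⁻¹ Y = Y := by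
  have hS := (Matrix.isUnit_iff_isUnit_det _).mp hX.sqrt.isUnit
  have hM := CFC.sqrt_mul_sqrt_self _ (conjugate_nonneg_of_nonneg hY (CFC.sqrt_nonneg X))
  rw [sharp_inv_eq hX hY]
  set S := CFC.sqrt X
  set M := CFC.sqrt (S * Y * S)
  have hSS : S * S = X := CFC.sqrt_mul_sqrt_self X hX.posSemidef.nonneg
  calc S⁻¹ * M * S⁻¹ * X * (S⁻¹ * M * S⁻¹) = S⁻¹ * (M * M) * S⁻¹ := by
        simp only [← hSS, mul_assoc, Matrix.nonsing_inv_mul_cancel_left _ _ hS,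
          Matrix.mul_nonsing_inv_cancel_left _ _ hS]
    _ = Y := by
        simp only [hM, mul_assoc, Matrix.nonsing_inv_mul_cancel_left _ _ hS,
          Matrix.mul_nonsing_inv _ hS, mul_one]

lemma nearLE_iff_one_le_sharp_inv {X Y : Matrix (Fin n) (Fin n) ℂ} :
    nearLE X Y ↔ 1 ≤ sharp X⁻¹ Y := Iff.rfl

lemma nearLE_iff_le_sqrt {X Y : Matrix (Fin n) (Fin n) ℂ} (hX : X.PosDef) (hY : 0 ≤ Y) :
    nearLE X Y ↔ X ≤ CFC.sqrt (CFC.sqrt X * Y * CFC.sqrt X) := by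
  have hS := (Matrix.isUnit_iff_isUnit_det _).mp hX.sqrt.isUnit
  rw [nearLE_iff_one_le_sharp_inv, sharp_inv_eq hX hY]
  set S := CFC.sqrt X
  set M := CFC.sqrt (S * Y * S)
  have hSS : S * S = X := CFC.sqrt_mul_sqrt_self X hX.posSemidef.nonneg
  have hconj : S⁻¹ * M * S⁻¹ - 1 = star S⁻¹ * (M - X) * S⁻¹ := by
    have hSi : star S⁻¹ = S⁻¹ := hX.sqrt.inv.isHermitian.eq
    rw [hSi, ← hSS, mul_sub, sub_mul]
    simp only [mul_assoc, Matrix.nonsing_inv_mul_cancel_left _ _ hS, Matrix.mul_nonsing_inv _ hS]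
  rw [← sub_nonneg, hconj, hX.sqrt.inv.isUnit.star_left_conjugate_nonneg_iff, sub_nonneg]

lemma nearLE_of_le {X Y : Matrix (Fin n) (Fin n) ℂ} (hX : X.PosDef) (hXY : X ≤ Y) :
    nearLE X Y := by
  have hX0 := hX.posSemidef.nonneg
  rw [nearLE_iff_le_sqrt hX (hX0.trans hXY)]
  set S := CFC.sqrt X
  have hSS : S * S = X := CFC.sqrt_mul_sqrt_self X hX0
  have hSXS : S * X * S = X * X := by rw [← hSS]; simp only [mul_assoc]
  calc X = CFC.sqrt (S * X * S) := by rw [hSXS, CFC.sqrt_mul_self X hX0]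
    _ ≤ CFC.sqrt (S * Y * S) :=
        CFC.sqrt_le_sqrt _ _ (conjugate_le_conjugate_of_nonneg hXY (CFC.sqrt_nonneg X))

theorem sq_nearLE_sq_of_le {U V : Matrix (Fin n) (Fin n) ℂ} (hU : U.PosDef) (hUV : U ≤ V) :
    nearLE (U * U) (V * V) := by
  have hU0 := hU.posSemidef.nonneg
  have hV0 := hU0.trans hUV
  have hH1 : 1 ≤ sharp U⁻¹ V := nearLE_iff_one_le_sharp_inv.mp (nearLE_of_le hU hUV)
  have hHUH : sharp U⁻¹ V * U * sharp U⁻¹ V = V := sharp_inv_mul_mul_sharp_inv hU hV0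
  have hUU : (U * U).PosDef := by simpa using Matrix.PosDef.one.conjugate hU
  rw [nearLE_iff_le_sqrt hUU (IsSelfAdjoint.of_nonneg hV0).mul_self_nonneg,
    CFC.sqrt_mul_self U hU0]
  set H := sharp U⁻¹ V
  set L := U * H * U
  have hL0 : 0 ≤ L := conjugate_nonneg_of_nonneg (zero_le_one.trans hH1) hU0
  calc U * U = U * 1 * U := by rw [mul_one]
    _ ≤ L := conjugate_le_conjugate_of_nonneg hH1 hU0
    _ = CFC.sqrt (L * 1 * L) := by rw [mul_one, CFC.sqrt_mul_self L hL0]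
    _ ≤ CFC.sqrt (L * (H * H) * L) :=
        CFC.sqrt_le_sqrt _ _ (conjugate_le_conjugate_of_nonneg (one_le_mul_self_of_one_le hH1) hL0)
    _ = CFC.sqrt (U * (V * V) * U) := by rw [← hHUH]; simp only [L, mul_assoc]

lemma conjugate_conjugate_eq_mul_self {R : Type*} [Semigroup R] (p g : R) :
    p * (g * (p * p) * g) * p = (p * g * p) * (p * g * p) := by
  simp only [mul_assoc]

theorem congr_spectralGM_nearLE_congr_wassersteinMean {n : ℕ}
    (A B : Matrix (Fin n) (Fin n) ℂ) (hA : A.PosDef) (hB : B.PosDef)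
    (t : ℝ) (ht0 : 0 ≤ t) (ht1 : t ≤ 1) :
    nearLE (mrpow A (1/2) * spectralGM t A B * mrpow A (1/2))
      (mrpow A (1/2) * wassersteinMean t A B * mrpow A (1/2)) := by
  have hC : (sharp A⁻¹ B).PosDef := sharp_inv_posDef hA hB
  rw [spectralGM, wassersteinMean, mrpow_eq_rpow hC.posSemidef.nonneg,
    mrpow_one_half hA.posSemidef.nonneg]
  have hPP := CFC.sqrt_mul_sqrt_self A hA.posSemidef.nonneg
  set C := sharp A⁻¹ B
  set P := CFC.sqrt A
  rw [← hPP, conjugate_conjugate_eq_mul_self, conjugate_conjugate_eq_mul_self]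
  exact sq_nearLE_sq_of_le ((hC.rpow t).conjugate hA.sqrt) <|
    conjugate_le_conjugate_of_nonneg
      (rpow_le_one_sub_smul_one_add_smul hC.posSemidef.nonneg ht0 ht1) (CFC.sqrt_nonneg A)
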